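/- Let K : ℝ² × ℝ² → ℝ be a measurable nonnegative doubly stochastic kernel (∫ K(ℓ,ℓ') dℓ' = 1 for every ℓ and ∫ K(ℓ,ℓ') dℓ = 1 for every ℓ'). Let h, h* : ℝ² → ℝ^C be measurable with E(h) = ∫ ‖h(ℓ) - h*(ℓ)‖² dℓ < ∞ and with finite spatial-variation term S = ∫∫ K(ℓ,ℓ') ‖h*(ℓ') - h*(ℓ)‖² dℓ' dℓ. Then the geographically weighted network h_W(ℓ) = ∫ K(ℓ,ℓ') h(ℓ') dℓ' satisfies E(h_W) ≤ 2·E(h) + 2·S: the GWNN error is controlled by the original error plus a term measuring how much the true classifier varies over the kernel's range, which vanishes when h* is spatially continuous relative to the kernel scale. -/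

import Mathlib

open MeasureTheory

variable {α : Type*} [MeasurableSpace α] {μ : Measure α}

lemma aux_integrable_mul_of_sq {K g : α → ℝ} (hK : ∀ x, 0 ≤ K x) (hg : ∀ x, 0 ≤ g x)
    (hmeas : AEStronglyMeasurable (fun x => K x * g x) μ)
    (hKi : Integrable K μ) (hKg2 : Integrable (fun x => K x * g x ^ 2) μ) :
    Integrable (fun x => K x * g x) μ := by
  refine Integrable.mono' (((hKi.add hKg2).const_mul (1/2))) hmeas ?_
  refine Filter.Eventually.of_forall fun x => ?_
  simp only [Pi.add_apply]
  have h1 : 0 ≤ K x * g x := mul_nonneg (hK x) (hg x)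
  rw [Real.norm_of_nonneg h1]
  nlinarith [mul_nonneg (hK x) (sq_nonneg (g x - 1))]

lemma aux_sq_integral_le {K g : α → ℝ} (hK : ∀ x, 0 ≤ K x) (hg : ∀ x, 0 ≤ g x)
    (hgm : AEStronglyMeasurable g μ)
    (hKi : Integrable K μ) (hKone : ∫ x, K x ∂μ = 1)
    (hKg2 : Integrable (fun x => K x * g x ^ 2) μ) :
    (∫ x, K x * g x ∂μ) ^ 2 ≤ ∫ x, K x * g x ^ 2 ∂μ := by
  have hconj : (2:ℝ).HolderConjugate 2 := ⟨by norm_num, by norm_num, by norm_num⟩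
  have hsm1 : AEStronglyMeasurable (fun x => Real.sqrt (K x)) μ :=
    Real.continuous_sqrt.comp_aestronglyMeasurable hKi.aestronglyMeasurable
  have hsm2 : AEStronglyMeasurable (fun x => Real.sqrt (K x) * g x) μ := hsm1.mul hgm
  have htwo : ENNReal.ofReal (2:ℝ) = 2 := by norm_num
  have hmem1 : MemLp (fun x => Real.sqrt (K x)) (ENNReal.ofReal (2:ℝ)) μ := by
    rw [htwo, memLp_two_iff_integrable_sq hsm1]
    refine hKi.congr (Filter.Eventually.of_forall fun x => ?_)
    simp [Real.sq_sqrt (hK x)]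
  have hmem2 : MemLp (fun x => Real.sqrt (K x) * g x) (ENNReal.ofReal (2:ℝ)) μ := by
    rw [htwo, memLp_two_iff_integrable_sq hsm2]
    refine hKg2.congr (Filter.Eventually.of_forall fun x => ?_)
    simp [mul_pow, Real.sq_sqrt (hK x)]
  have hCS := integral_mul_le_Lp_mul_Lq_of_nonneg hconj
    (Filter.Eventually.of_forall fun x => Real.sqrt_nonneg (K x))
    (Filter.Eventually.of_forall fun x => mul_nonneg (Real.sqrt_nonneg (K x)) (hg x))
    hmem1 hmem2
  have heq1 : ∫ x, Real.sqrt (K x) * (Real.sqrt (K x) * g x) ∂μ = ∫ x, K x * g x ∂μ := by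
    refine integral_congr_ae (Filter.Eventually.of_forall fun x => ?_)
    simp [← mul_assoc, Real.mul_self_sqrt (hK x)]
  have heq2 : ∫ x, Real.sqrt (K x) ^ (2:ℝ) ∂μ = 1 := by
    rw [← hKone]
    refine integral_congr_ae (Filter.Eventually.of_forall fun x => ?_)
    simp [Real.rpow_two, Real.sq_sqrt (hK x)]
  have heq3 : ∫ x, (Real.sqrt (K x) * g x) ^ (2:ℝ) ∂μ = ∫ x, K x * g x ^ 2 ∂μ := by
    refine integral_congr_ae (Filter.Eventually.of_forall fun x => ?_)
    simp [Real.rpow_two, mul_pow, Real.sq_sqrt (hK x)]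
  rw [heq1, heq2, heq3] at hCS
  have hI2nonneg : 0 ≤ ∫ x, K x * g x ^ 2 ∂μ :=
    integral_nonneg fun x => mul_nonneg (hK x) (sq_nonneg _)
  have hbound : ∫ x, K x * g x ∂μ ≤ (∫ x, K x * g x ^ 2 ∂μ) ^ (1/2 : ℝ) := by
    simpa using hCS
  have hnn : 0 ≤ ∫ x, K x * g x ∂μ :=
    integral_nonneg fun x => mul_nonneg (hK x) (hg x)
  calc (∫ x, K x * g x ∂μ) ^ 2
      ≤ ((∫ x, K x * g x ^ 2 ∂μ) ^ (1/2:ℝ)) ^ 2 := pow_le_pow_left₀ hnn hbound 2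
    _ = ∫ x, K x * g x ^ 2 ∂μ := by
        rw [← Real.rpow_natCast ((∫ x, K x * g x ^ 2 ∂μ) ^ (1/2:ℝ)) 2,
          ← Real.rpow_mul hI2nonneg]
        norm_num


/-- For a measurable nonnegative doubly stochastic kernel `K` on
ℝ², the error of the geographically weighted network
`h_W(ℓ) = ∫ K(ℓ,ℓ') h(ℓ') dℓ'` is controlled by twice the original error plus
twice the kernel-weighted spatial variation of the true classifier:
`E(h_W) ≤ 2·E(h) + 2·S` with
`S = ∫∫ K(ℓ,ℓ') ‖h*(ℓ') - h*(ℓ)‖² dℓ' dℓ`. -/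
theorem gwnn_error_le_two_error_add_two_variation
    (C : ℕ)
    (K : EuclideanSpace ℝ (Fin 2) → EuclideanSpace ℝ (Fin 2) → ℝ)
    (hKmeas : Measurable (fun p : EuclideanSpace ℝ (Fin 2) × EuclideanSpace ℝ (Fin 2) => K p.1 p.2))
    (hKnonneg : ∀ ℓ ℓ', 0 ≤ K ℓ ℓ')
    (hKrow : ∀ ℓ, ∫ ℓ', K ℓ ℓ' = 1)
    (hKcol : ∀ ℓ', ∫ ℓ, K ℓ ℓ' = 1)
    (h hstar : EuclideanSpace ℝ (Fin 2) → EuclideanSpace ℝ (Fin C))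
    (hm : Measurable h) (hsm : Measurable hstar)
    (hE : Integrable (fun ℓ => ‖h ℓ - hstar ℓ‖ ^ 2))
    (hS : Integrable
      (fun p : EuclideanSpace ℝ (Fin 2) × EuclideanSpace ℝ (Fin 2) =>
        K p.1 p.2 * ‖hstar p.2 - hstar p.1‖ ^ 2)
      (volume.prod volume)) :
    ∫ ℓ, ‖(∫ ℓ', K ℓ ℓ' • h ℓ') - hstar ℓ‖ ^ 2
      ≤ 2 * (∫ ℓ, ‖h ℓ - hstar ℓ‖ ^ 2)
        + 2 * ∫ ℓ, ∫ ℓ', K ℓ ℓ' * ‖hstar ℓ' - hstar ℓ‖ ^ 2 := by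
  have hmK : ∀ ℓ, Measurable (fun ℓ' => K ℓ ℓ') := fun ℓ =>
    hKmeas.comp measurable_prodMk_left
  have hmK' : ∀ ℓ', Measurable (fun ℓ => K ℓ ℓ') := fun ℓ' =>
    hKmeas.comp measurable_prodMk_right
  have hKint : ∀ ℓ, Integrable (fun ℓ' => K ℓ ℓ') := by
    intro ℓ; by_contra hc
    have := hKrow ℓ
    rw [integral_undef hc] at this
    norm_num at this
  have hKcolint : ∀ ℓ', Integrable (fun ℓ => K ℓ ℓ') := by
    intro ℓ'; by_contra hc
    have := hKcol ℓ'
    rw [integral_undef hc] at this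
    norm_num at this
  -- measurability of integrands
  have hgE : Measurable fun ℓ => ‖h ℓ - hstar ℓ‖ ^ 2 := ((hm.sub hsm).norm).pow_const 2
  have hEprodMeas :
      Measurable (fun p : EuclideanSpace ℝ (Fin 2) × EuclideanSpace ℝ (Fin 2) =>
        K p.1 p.2 * ‖h p.2 - hstar p.2‖ ^ 2) :=
    hKmeas.mul (hgE.comp measurable_snd)
  -- the error term as a product integrable function
  have hEprod : Integrable
      (fun p : EuclideanSpace ℝ (Fin 2) × EuclideanSpace ℝ (Fin 2) =>
        K p.1 p.2 * ‖h p.2 - hstar p.2‖ ^ 2) (volume.prod volume) := by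
    rw [integrable_prod_iff' hEprodMeas.aestronglyMeasurable]
    constructor
    · exact Filter.Eventually.of_forall fun ℓ' =>
        show Integrable (fun x => K x ℓ' * ‖h ℓ' - hstar ℓ'‖ ^ 2) volume from
          (hKcolint ℓ').mul_const _
    · refine hE.congr (Filter.Eventually.of_forall fun ℓ' => ?_)
      show ‖h ℓ' - hstar ℓ'‖ ^ 2 = ∫ x, ‖K x ℓ' * ‖h ℓ' - hstar ℓ'‖ ^ 2‖
      have hnorm : (fun x => ‖K x ℓ' * ‖h ℓ' - hstar ℓ'‖ ^ 2‖) =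
          fun x => K x ℓ' * ‖h ℓ' - hstar ℓ'‖ ^ 2 := by
        funext x
        exact Real.norm_of_nonneg (mul_nonneg (hKnonneg x ℓ') (sq_nonneg _))
      rw [hnorm, integral_mul_const, hKcol ℓ', one_mul]
  -- pointwise a.e. bound
  have key : ∀ᵐ ℓ ∂(volume : Measure (EuclideanSpace ℝ (Fin 2))),
      ‖(∫ ℓ', K ℓ ℓ' • h ℓ') - hstar ℓ‖ ^ 2
        ≤ 2 * (∫ ℓ', K ℓ ℓ' * ‖h ℓ' - hstar ℓ'‖ ^ 2)
          + 2 * ∫ ℓ', K ℓ ℓ' * ‖hstar ℓ' - hstar ℓ‖ ^ 2 := by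
    filter_upwards [hEprod.prod_right_ae, hS.prod_right_ae] with ℓ hIE hIS
    set c := hstar ℓ with hc
    have hgmeas : Measurable fun ℓ' => ‖h ℓ' - c‖ := (hm.sub measurable_const).norm
    have hptwise : ∀ ℓ', K ℓ ℓ' * ‖h ℓ' - c‖ ^ 2
        ≤ 2 * (K ℓ ℓ' * ‖h ℓ' - hstar ℓ'‖ ^ 2) + 2 * (K ℓ ℓ' * ‖hstar ℓ' - c‖ ^ 2) := by
      intro ℓ'
      have h0 : 0 ≤ K ℓ ℓ' := hKnonneg ℓ ℓ'
      have htri : ‖h ℓ' - c‖ ≤ ‖h ℓ' - hstar ℓ'‖ + ‖hstar ℓ' - c‖ :=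
        norm_sub_le_norm_sub_add_norm_sub _ _ _
      have hsq : ‖h ℓ' - c‖ ^ 2 ≤ 2 * ‖h ℓ' - hstar ℓ'‖ ^ 2 + 2 * ‖hstar ℓ' - c‖ ^ 2 := by
        nlinarith [norm_nonneg (h ℓ' - c), norm_nonneg (h ℓ' - hstar ℓ'),
          norm_nonneg (hstar ℓ' - c), sq_nonneg (‖h ℓ' - hstar ℓ'‖ - ‖hstar ℓ' - c‖)]
      nlinarith [mul_le_mul_of_nonneg_left hsq h0]
    have hIg2 : Integrable (fun ℓ' => K ℓ ℓ' * ‖h ℓ' - c‖ ^ 2) := by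
      refine Integrable.mono' ((hIE.const_mul 2).add (hIS.const_mul 2))
        ((hmK ℓ).mul (hgmeas.pow_const 2)).aestronglyMeasurable
        (Filter.Eventually.of_forall fun ℓ' => ?_)
      simp only [Pi.add_apply]
      rw [Real.norm_of_nonneg (mul_nonneg (hKnonneg ℓ ℓ') (sq_nonneg _))]
      exact hptwise ℓ'
    have hIg : Integrable (fun ℓ' => K ℓ ℓ' * ‖h ℓ' - c‖) :=
      aux_integrable_mul_of_sq (hKnonneg ℓ) (fun _ => norm_nonneg _)
        ((hmK ℓ).mul hgmeas).aestronglyMeasurable (hKint ℓ) hIg2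
    have hIsmul : Integrable (fun ℓ' => K ℓ ℓ' • (h ℓ' - c)) := by
      refine Integrable.mono' hIg
        ((hmK ℓ).smul (hm.sub measurable_const)).aestronglyMeasurable
        (Filter.Eventually.of_forall fun ℓ' => ?_)
      show ‖K ℓ ℓ' • (h ℓ' - c)‖ ≤ K ℓ ℓ' * ‖h ℓ' - c‖
      rw [norm_smul, Real.norm_of_nonneg (hKnonneg ℓ ℓ')]
    have hIKh : Integrable (fun ℓ' => K ℓ ℓ' • h ℓ') := by
      have heq : (fun ℓ' => K ℓ ℓ' • h ℓ')
          = fun ℓ' => K ℓ ℓ' • (h ℓ' - c) + K ℓ ℓ' • c := by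
        funext ℓ'; rw [smul_sub]; abel
      rw [heq]; exact hIsmul.add ((hKint ℓ).smul_const c)
    have hint_eq : (∫ ℓ', K ℓ ℓ' • h ℓ') - c = ∫ ℓ', K ℓ ℓ' • (h ℓ' - c) := by
      have heq2 : ∫ ℓ', K ℓ ℓ' • (h ℓ' - c)
          = (∫ ℓ', K ℓ ℓ' • h ℓ') - ∫ ℓ', K ℓ ℓ' • c := by
        rw [← integral_sub hIKh ((hKint ℓ).smul_const c)]
        congr 1; funext ℓ'; rw [smul_sub]
      rw [heq2, integral_smul_const, hKrow ℓ, one_smul]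
    rw [hint_eq]
    have hnormle : ‖∫ ℓ', K ℓ ℓ' • (h ℓ' - c)‖ ≤ ∫ ℓ', K ℓ ℓ' * ‖h ℓ' - c‖ := by
      refine (norm_integral_le_integral_norm _).trans_eq ?_
      refine integral_congr_ae (Filter.Eventually.of_forall fun ℓ' => ?_)
      show ‖K ℓ ℓ' • (h ℓ' - c)‖ = K ℓ ℓ' * ‖h ℓ' - c‖
      rw [norm_smul, Real.norm_of_nonneg (hKnonneg ℓ ℓ')]
    have hCS := aux_sq_integral_le (hKnonneg ℓ) (fun _ => norm_nonneg _)
      hgmeas.aestronglyMeasurable (hKint ℓ) (hKrow ℓ) hIg2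
    have h1 : ‖∫ ℓ', K ℓ ℓ' • (h ℓ' - c)‖ ^ 2 ≤ ∫ ℓ', K ℓ ℓ' * ‖h ℓ' - c‖ ^ 2 :=
      le_trans (pow_le_pow_left₀ (norm_nonneg _) hnormle 2) hCS
    refine h1.trans ?_
    have h2 : ∫ ℓ', K ℓ ℓ' * ‖h ℓ' - c‖ ^ 2
        ≤ ∫ ℓ', (2 * (K ℓ ℓ' * ‖h ℓ' - hstar ℓ'‖ ^ 2) + 2 * (K ℓ ℓ' * ‖hstar ℓ' - c‖ ^ 2)) :=
      integral_mono hIg2 ((hIE.const_mul 2).add (hIS.const_mul 2)) hptwise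
    refine h2.trans_eq ?_
    rw [integral_add (hIE.const_mul 2) (hIS.const_mul 2), integral_const_mul, integral_const_mul]
  -- integrable marginals
  have hA : Integrable (fun ℓ => ∫ ℓ', K ℓ ℓ' * ‖h ℓ' - hstar ℓ'‖ ^ 2) :=
    hEprod.integral_prod_left
  have hB : Integrable (fun ℓ => ∫ ℓ', K ℓ ℓ' * ‖hstar ℓ' - hstar ℓ‖ ^ 2) :=
    hS.integral_prod_left
  -- measurability of the GWNN error integrand
  have hGmeas : AEStronglyMeasurable
      (fun ℓ => ‖(∫ ℓ', K ℓ ℓ' • h ℓ') - hstar ℓ‖ ^ 2)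
      (volume : Measure (EuclideanSpace ℝ (Fin 2))) := by
    have hsm' : StronglyMeasurable
        (fun p : EuclideanSpace ℝ (Fin 2) × EuclideanSpace ℝ (Fin 2) => K p.1 p.2 • h p.2) :=
      (hKmeas.smul (hm.comp measurable_snd)).stronglyMeasurable
    have hWm : StronglyMeasurable (fun ℓ => ∫ ℓ', K ℓ ℓ' • h ℓ') :=
      hsm'.integral_prod_right'
    exact (((hWm.measurable.sub hsm).norm).pow_const 2).aestronglyMeasurable
  have hGint : Integrable (fun ℓ => ‖(∫ ℓ', K ℓ ℓ' • h ℓ') - hstar ℓ‖ ^ 2) := by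
    refine Integrable.mono' ((hA.const_mul 2).add (hB.const_mul 2)) hGmeas ?_
    filter_upwards [key] with ℓ hkey
    simpa [Real.norm_of_nonneg (sq_nonneg _)] using hkey
  -- put it together
  have hmono := integral_mono_ae hGint ((hA.const_mul 2).add (hB.const_mul 2)) key
  have hintadd : ∫ ℓ, (2 * (∫ ℓ', K ℓ ℓ' * ‖h ℓ' - hstar ℓ'‖ ^ 2)
        + 2 * ∫ ℓ', K ℓ ℓ' * ‖hstar ℓ' - hstar ℓ‖ ^ 2)
      = 2 * (∫ ℓ, ∫ ℓ', K ℓ ℓ' * ‖h ℓ' - hstar ℓ'‖ ^ 2)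
        + 2 * ∫ ℓ, ∫ ℓ', K ℓ ℓ' * ‖hstar ℓ' - hstar ℓ‖ ^ 2 := by
    rw [integral_add (hA.const_mul 2) (hB.const_mul 2), integral_const_mul, integral_const_mul]
  have hAeq : ∫ ℓ, ∫ ℓ', K ℓ ℓ' * ‖h ℓ' - hstar ℓ'‖ ^ 2
      = ∫ ℓ, ‖h ℓ - hstar ℓ‖ ^ 2 := by
    rw [integral_integral_swap (f := fun ℓ ℓ' => K ℓ ℓ' * ‖h ℓ' - hstar ℓ'‖ ^ 2) hEprod]
    refine integral_congr_ae (Filter.Eventually.of_forall fun ℓ' => ?_)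
    show ∫ ℓ, K ℓ ℓ' * ‖h ℓ' - hstar ℓ'‖ ^ 2 = ‖h ℓ' - hstar ℓ'‖ ^ 2
    rw [integral_mul_const, hKcol ℓ', one_mul]
  exact hmono.trans (le_of_eq (hintadd.trans (by rw [hAeq])))
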